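/- Let G be a finite group, L a component of G, and K ≤ G a subgroup. Suppose there is a subset S ⊆ L that is not contained in Z(L) and satisfies kSk⁻¹ = S for every k ∈ K. Then K ≤ N_G(L). -/

import Mathlib

attribute [local instance] Classical.propDecidable

noncomputable section

namespace QF

/-! ## Group-theoretic notions -/

/-- `H` is a normal subgroup of `K` (as subgroups of an ambient group `G`). -/
def NormalIn {G : Type*} [Group G] (H K : Subgroup G) : Prop :=
  H ≤ K ∧ ∀ k ∈ K, ∀ h ∈ H, k * h * k⁻¹ ∈ H

/-- `L` is a subnormal subgroup of `G`: there is a finite chain of subgroups from `L` to `G`,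
each normal in the next. -/
def IsSubnormal {G : Type*} [Group G] (L : Subgroup G) : Prop :=
  ∃ (n : ℕ) (c : ℕ → Subgroup G), c 0 = L ∧ c n = ⊤ ∧ ∀ i < n, NormalIn (c i) (c (i + 1))

/-- `L` is quasisimple: `L = [L,L]` and `L/Z(L)` is a nonabelian simple group. -/
def IsQuasisimple {G : Type*} [Group G] (L : Subgroup G) : Prop :=
  ⁅L, L⁆ = L ∧ IsSimpleGroup (↥L ⧸ Subgroup.center ↥L) ∧
    ∃ a b : ↥L ⧸ Subgroup.center ↥L, a * b ≠ b * a

/-- A component of a group: a subnormal quasisimple subgroup. -/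
def IsComponent {G : Type*} [Group G] (L : Subgroup G) : Prop :=
  IsSubnormal L ∧ IsQuasisimple L

/-- The Fitting subgroup: the subgroup generated by all nilpotent normal subgroups. -/
def fittingSubgroup (G : Type*) [Group G] : Subgroup G :=
  sSup {N : Subgroup G | N.Normal ∧ Group.IsNilpotent ↥N}

/-- `E(G)`: the subgroup generated by all components of `G`. -/
def layer (G : Type*) [Group G] : Subgroup G :=
  sSup {L : Subgroup G | IsComponent L}

/-- The generalized Fitting subgroup `F*(G) = F(G) ⬝ E(G)`. -/
def genFitting (G : Type*) [Group G] : Subgroup G :=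
  fittingSubgroup G ⊔ layer G

/-- `O_p(G) = 1`: every normal `p`-subgroup of `G` is trivial. -/
def OpTrivial (p : ℕ) (G : Type*) [Group G] : Prop :=
  ∀ N : Subgroup G, N.Normal → IsPGroup p ↥N → N = ⊥

/-- `E` is an elementary abelian `p`-subgroup (possibly trivial). -/
def IsElemAb (p : ℕ) {G : Type*} [Group G] (E : Subgroup G) : Prop :=
  (∀ x ∈ E, ∀ y ∈ E, x * y = y * x) ∧ ∀ x ∈ E, x ^ p = 1

/-- The Quillen poset `A_p(H)` of nontrivial elementary abelian `p`-subgroups of `G`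
contained in the subgroup `H`, regarded as a set of subgroups of `G`. -/
def apIn (p : ℕ) {G : Type*} [Group G] (H : Subgroup G) : Set (Subgroup G) :=
  {E | E ≠ ⊥ ∧ IsElemAb p E ∧ E ≤ H}

/-- The `p`-outer poset of `L` in `G`: nontrivial elementary abelian `p`-subgroups `B`
of `N_G(L)` with `B ∩ (L C_G(L)) = 1`. -/
def outPoset (p : ℕ) {G : Type*} [Group G] (L : Subgroup G) : Set (Subgroup G) :=
  {B | B ≠ ⊥ ∧ IsElemAb p B ∧ B ≤ Subgroup.normalizer (L : Set G) ∧
    B ⊓ (L ⊔ Subgroup.centralizer (L : Set G)) = ⊥}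

/-- The `p`-rank of a group: the largest `n` such that `K` contains an elementary abelian
`p`-subgroup of order `p ^ n`. -/
def pRank (p : ℕ) (K : Type*) [Group K] : ℕ :=
  sSup {n : ℕ | ∃ E : Subgroup K, IsElemAb p E ∧ Nat.card ↥E = p ^ n}

/-- The `p`-local `q`-rank of a group `K`: the maximum of the `q`-ranks of normalizers of
nontrivial `p`-subgroups. -/
def pLocalRank (p q : ℕ) (K : Type*) [Group K] : ℕ :=
  sSup {n : ℕ | ∃ P : Subgroup K, P ≠ ⊥ ∧ IsPGroup p ↥P ∧
    ∃ E : Subgroup K, E ≤ Subgroup.normalizer (P : Set K) ∧ IsElemAb q E ∧ Nat.card ↥E = q ^ n}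

/-- A group is `q`-elementary if it is the (internal) direct product of a cyclic group and
a `q`-group. -/
def qElementary (q : ℕ) (G : Type*) [Group G] : Prop :=
  ∃ C R : Subgroup G, IsCyclic ↥C ∧ IsPGroup q ↥R ∧
    (∀ c ∈ C, ∀ r ∈ R, c * r = r * c) ∧ C ⊓ R = ⊥ ∧ C ⊔ R = ⊤

/-! ## The augmented rational chain complex of a finite poset

We represent a rational simplicial chain of (degree `k - 1`) of a poset `α` as a function
`Finset α → ℚ` supported on the `k`-element chains of `α`. -/

/-- The coefficient of the face `t` in the boundary of the simplex `s`: if `t ⊆ s` with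
exactly one element `x` of `s` deleted, this is `(-1) ^ (number of elements of s below x)`. -/
def bdryCoeff {α : Type*} [PartialOrder α] (s t : Finset α) : ℚ :=
  if t ⊆ s ∧ t.card + 1 = s.card then
    ∑ x ∈ s \ t, (-1 : ℚ) ^ (s.filter fun y => y < x).card
  else 0

/-- The simplicial boundary operator (on functions `Finset α → ℚ`). -/
def bdryFun {α : Type*} [PartialOrder α] (f : Finset α → ℚ) : Finset α → ℚ :=
  fun t => ∑ᶠ s : Finset α, bdryCoeff s t * f s

/-- `f` is a chain of size `k` (i.e. simplicial degree `k - 1`) of the subposet `S` of `α`: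
it is supported on totally ordered `k`-element subsets of `S`. -/
def SuppOn {α : Type*} [PartialOrder α] (S : Set α) (k : ℕ) (f : Finset α → ℚ) : Prop :=
  ∀ s, f s ≠ 0 → s.card = k ∧ IsChain (· ≤ ·) (↑s : Set α) ∧ ↑s ⊆ S

/-- `f` is a cycle of size `k` (degree `k - 1`) of the augmented rational chain complex of
the subposet `S`. -/
def IsCycleOn {α : Type*} [PartialOrder α] (S : Set α) (k : ℕ) (f : Finset α → ℚ) : Prop :=
  SuppOn S k f ∧ bdryFun f = 0

/-- `f` is a boundary of size `k` (degree `k - 1`) in the augmented rational chain complex of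
the subposet `S`. -/
def IsBoundaryOn {α : Type*} [PartialOrder α] (S : Set α) (k : ℕ) (f : Finset α → ℚ) : Prop :=
  ∃ g : Finset α → ℚ, SuppOn S (k + 1) g ∧ bdryFun g = f

/-- The reduced rational homology of the subposet `S` is nonzero in degree `k - 1`. -/
def RHomNZ {α : Type*} [PartialOrder α] (S : Set α) (k : ℕ) : Prop :=
  ∃ f : Finset α → ℚ, IsCycleOn S k f ∧ ¬ IsBoundaryOn S k f

/-- The reduced Euler characteristic of the subposet `S`:
`χ̃(S) = ∑_{n ≥ -1} (-1)^n f_n(S)` where `f_n` is the number of `(n+1)`-element chains. -/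
def redEuler {α : Type*} [PartialOrder α] (S : Set α) : ℤ :=
  ∑ᶠ s : Finset α,
    if IsChain (· ≤ ·) (↑s : Set α) ∧ ↑s ⊆ S then (-1 : ℤ) ^ (s.card + 1) else 0

/-! ## Chains in a subcomplex of the order complex -/

/-- `f` is a chain of size `k` supported on the subcomplex `M` (together with the empty chain,
for the augmentation). -/
def SuppM {α : Type*} [PartialOrder α] (M : Set (Finset α)) (k : ℕ) (f : Finset α → ℚ) : Prop :=
  ∀ s, f s ≠ 0 → s.card = k ∧ (s = ∅ ∨ s ∈ M)

/-- `f` is a cycle of size `k` of the (augmented) chain complex of the subcomplex `M`. -/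
def IsCycleM {α : Type*} [PartialOrder α] (M : Set (Finset α)) (k : ℕ) (f : Finset α → ℚ) :
    Prop :=
  SuppM M k f ∧ bdryFun f = 0

/-- `f` is a boundary of size `k` in the (augmented) chain complex of the subcomplex `M`. -/
def IsBoundaryM {α : Type*} [PartialOrder α] (M : Set (Finset α)) (k : ℕ) (f : Finset α → ℚ) :
    Prop :=
  ∃ g : Finset α → ℚ, SuppM M (k + 1) g ∧ bdryFun g = f

/-! ## Quillen-conjecture properties -/

/-- `G` satisfies (H-QC) at `p`: if `O_p(G) = 1` then `A_p(G)` has nonzero reduced rational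
homology in some degree. -/
def HQC (p : ℕ) (G : Type*) [Group G] : Prop :=
  OpTrivial p G → ∃ k : ℕ, RHomNZ (apIn p (⊤ : Subgroup G)) k

/-- `K` has Quillen dimension at `p`: if `O_p(K) = 1` then `A_p(K)` has nonzero reduced
rational homology in degree `m_p(K) - 1`. -/
def QDp (p : ℕ) (K : Type*) [Group K] : Prop :=
  OpTrivial p K → RHomNZ (apIn p (⊤ : Subgroup K)) (pRank p K)

/-- The fixed-point subposet `A_p(H)^Q` under conjugation by the subgroup `Q`. -/
def apFixed (p : ℕ) {G : Type*} [Group G] (H Q : Subgroup G) : Set (Subgroup G) :=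
  {E | E ∈ apIn p H ∧ ∀ x ∈ Q, ∀ g : G, g ∈ E ↔ x * g * x⁻¹ ∈ E}

/-- The fixed-point subposet `A_p(H)^g` under conjugation by the element `g`. -/
def apFixedElt (p : ℕ) {G : Type*} [Group G] (H : Subgroup G) (g : G) : Set (Subgroup G) :=
  {E | E ∈ apIn p H ∧ ∀ h : G, h ∈ E ↔ g * h * g⁻¹ ∈ E}

/-- Property `R(2)` for a (nonabelian simple) group `L`. -/
def PropertyR2 (L : Type*) [Group L] : Prop :=
  ∃ Q : Subgroup L, qElementary 3 ↥Q ∧ Odd (Nat.card ↥Q) ∧ ¬ OpTrivial 3 ↥Q ∧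
    ¬ ((3 : ℤ) ∣ redEuler (apFixed 2 (⊤ : Subgroup L) Q)) ∧
    ∀ E : Subgroup (MulAut L), E ≠ ⊥ → IsElemAb 2 E →
      E ≤ Subgroup.centralizer
        ((Subgroup.map (MulAut.conj : L →* MulAut L) Q : Subgroup (MulAut L)) : Set (MulAut L)) →
      E ≤ (MulAut.conj : L →* MulAut L).range

/-! ## The pre-join of posets and the initial shuffle product -/

/-- The pre-join of `X` and `Y`: the poset `(C⁻X × C⁻Y) \ {(⊥, ⊥)}`. -/
abbrev PreJoin (X Y : Type*) := {p : WithBot X × WithBot Y // p ≠ (⊥, ⊥)}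

/-- The embedding of `X` into the pre-join, `x ↦ (x, ⊥)`. -/
def inX {X Y : Type*} (x : X) : PreJoin X Y :=
  ⟨((x : WithBot X), ⊥), fun h => WithBot.coe_ne_bot (congrArg Prod.fst h)⟩

/-- The embedding of `Y` into the pre-join, `y ↦ (⊥, y)`. -/
def inY {X Y : Type*} (y : Y) : PreJoin X Y :=
  ⟨(⊥, (y : WithBot Y)), fun h => WithBot.coe_ne_bot (congrArg Prod.snd h)⟩

/-- The element `(x, y)` of the pre-join. -/
def inXY {X Y : Type*} (x : X) (y : Y) : PreJoin X Y :=
  ⟨((x : WithBot X), (y : WithBot Y)), fun h => WithBot.coe_ne_bot (congrArg Prod.fst h)⟩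

/-- `c` is a shuffle chain for the pair `(a, b)`: a maximal chain of the grid poset determined
by the `X`-part of `a` and by `b` (with the bottom `(⊥, ⊥)` removed), i.e. a chain of the
pre-join of cardinality `|a_X| + |b|` whose coordinates come from `a` and `b`. -/
def gridOK {X Y W : Type*} [PartialOrder X] [PartialOrder Y] [PartialOrder W]
    (ιP : PreJoin X Y ↪o W) (a b : Finset W) (c : Finset (PreJoin X Y)) : Prop :=
  IsChain (· ≤ ·) (↑c : Set (PreJoin X Y)) ∧
  c.card = (a.filter fun w => ∃ x : X, w = ιP (inX x)).card + b.card ∧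
  ∀ q ∈ c, (q.1.1 = ⊥ ∨ ∃ x : X, q.1.1 = (x : WithBot X) ∧ ιP (inX x) ∈ a) ∧
    (q.1.2 = ⊥ ∨ ∃ y : Y, q.1.2 = (y : WithBot Y) ∧ ιP (inY y) ∈ b)

/-- The number of inversions of the shuffle chain `c` (the number of cells of the
`a_X × b` rectangle lying below the corresponding lattice path). -/
def invCount {X Y W : Type*} [PartialOrder X] [PartialOrder Y] [PartialOrder W]
    (ιP : PreJoin X Y ↪o W) (a b : Finset W) (c : Finset (PreJoin X Y)) : ℕ :=
  Set.ncard {xy : X × Y | ιP (inX xy.1) ∈ a ∧ ιP (inY xy.2) ∈ b ∧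
    ∀ q ∈ c, q.1.1 = (xy.1 : WithBot X) → (xy.2 : WithBot Y) ≤ q.1.2}

/-- The coefficient of the chain `e` of `W` in the initial shuffle product `T(a, b)`. -/
def Tcoeff {X Y Z W : Type*} [PartialOrder X] [PartialOrder Y] [PartialOrder Z] [PartialOrder W]
    (ιP : PreJoin X Y ↪o W) (ιZ : Z ↪o W) (a b e : Finset W) : ℚ :=
  ∑ᶠ c : Finset (PreJoin X Y),
    if gridOK ιP a b c ∧
        e = c.image (fun q => ιP q) ∪ a.filter (fun w => ∃ z : Z, w = ιZ z) then
      (-1 : ℚ) ^ invCount ιP a b c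
    else 0

/-- The initial shuffle product `T_*(f ⊗ g)`, as a function on `Finset W`. -/
def Tmap {X Y Z W : Type*} [PartialOrder X] [PartialOrder Y] [PartialOrder Z] [PartialOrder W]
    (ιP : PreJoin X Y ↪o W) (ιZ : Z ↪o W) (f g : Finset W → ℚ) : Finset W → ℚ :=
  fun e => ∑ᶠ a : Finset W, ∑ᶠ b : Finset W, f a * g b * Tcoeff ιP ιZ a b e

/-! If a quasisimple `L` is subnormal in `T` and `N ⊴ T` does not contain `L`, then `N`
centralizes `L`. For `L ⊴ T` this is because the image of `N ∩ L` in the simple group `L/Z(L)` is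
trivial, or else `L = (N ∩ L) Z(L)` and `L = [L, L] ≤ N`. In general, let `K ⊴ T` be the term of a
subnormal series above `L`: by induction `N ∩ K` centralizes `L`, hence so does `[L, N] ≤ N ∩ K`,
and the three subgroups lemma gives `[L, N] = [[L, L], N] = 1`. Running along a subnormal series of
a second subnormal subgroup `H` then gives `L ≤ H` or `[L, H] = 1`.

For `k ∈ K` take `H = kLk⁻¹`. Since `S ⊆ L ∩ kLk⁻¹` is not central in `L`, the second case is
impossible, so `L ≤ kLk⁻¹`; as `k⁻¹ ∈ K` as well, `kLk⁻¹ = L`. -/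

lemma _root_.Subgroup.Normal.le_center_or_eq_top {Q : Type*} [Group Q]
    [IsSimpleGroup (Q ⧸ Subgroup.center Q)] {N : Subgroup Q} (hN : N.Normal)
    (hQ : commutator Q = ⊤) : N ≤ Subgroup.center Q ∨ N = ⊤ := by
  rcases (hN.map _ (QuotientGroup.mk'_surjective (Subgroup.center Q))).eq_bot_or_eq_top
    with hbot | htop
  · left
    rwa [Subgroup.map_eq_bot_iff, QuotientGroup.ker_mk'] at hbot
  · right
    have hsup : N ⊔ Subgroup.center Q = ⊤ := by
      have h := Subgroup.comap_map_eq (QuotientGroup.mk' (Subgroup.center Q)) N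
      rwa [htop, Subgroup.comap_top, QuotientGroup.ker_mk', eq_comm] at h
    rw [eq_top_iff, ← hQ]
    exact Subgroup.Normal.commutator_le_of_self_sup_commutative_eq_top hsup inferInstance

lemma _root_.Subgroup.le_normalizer_of_forall_le_map_conj {G : Type*} [Group G] {L K : Subgroup G}
    (h : ∀ g ∈ K, L ≤ L.map (MulAut.conj g : G →* G)) :
    K ≤ Subgroup.normalizer (L : Set G) := by
  intro k hk
  rw [Subgroup.mem_normalizer_iff_map_conj_eq]
  refine le_antisymm ?_ (h k hk)
  simpa [Subgroup.map_map, MulAut.inv_def] using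
    Subgroup.map_mono (f := (MulAut.conj k : G →* G)) (h k⁻¹ (K.inv_mem hk))

namespace NormalIn

variable {G : Type*} [Group G] {H K T : Subgroup G}

lemma normal_subgroupOf (h : NormalIn H K) : (H.subgroupOf K).Normal :=
  ⟨fun n hn g => h.2 g g.2 n hn⟩

lemma inf_right (h : NormalIn H K) (C : Subgroup G) : NormalIn (H ⊓ C) (K ⊓ C) :=
  ⟨inf_le_inf_right C h.1, fun k hk x hx =>
    ⟨h.2 k hk.1 x hx.1, C.mul_mem (C.mul_mem hk.2 hx.2) (C.inv_mem hk.2)⟩⟩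

lemma map {G' : Type*} [Group G'] (h : NormalIn H K) (f : G →* G') :
    NormalIn (H.map f) (K.map f) := by
  refine ⟨Subgroup.map_mono h.1, ?_⟩
  rintro _ ⟨k, hk, rfl⟩ _ ⟨x, hx, rfl⟩
  exact ⟨k * x * k⁻¹, h.2 k hk x hx, by simp⟩

lemma commutator_le_inf (hH : NormalIn H T) (hK : NormalIn K T) : ⁅H, K⁆ ≤ H ⊓ K := by
  rw [Subgroup.commutator_le]
  intro x hx y hy
  refine ⟨?_, K.mul_mem (hK.2 x (hH.1 hx) y hy) (K.inv_mem hy)⟩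
  rw [commutatorElement_def, mul_assoc, mul_assoc, ← mul_assoc y]
  exact H.mul_mem hx (hH.2 y (hK.1 hy) x⁻¹ (H.inv_mem hx))

end NormalIn

/-- Unlike `Subgroup.IsSubnormal`, this is relative to `T` and built from the top down, so that
induction along the series keeps its bottom term fixed. -/
inductive SubnormalIn {G : Type*} [Group G] : Subgroup G → Subgroup G → Prop
  | refl (H : Subgroup G) : SubnormalIn H H
  | step {H K T : Subgroup G} : SubnormalIn H K → NormalIn K T → SubnormalIn H T

namespace SubnormalIn

variable {G : Type*} [Group G] {H K T : Subgroup G}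

lemma le (h : SubnormalIn H T) : H ≤ T := by
  induction h with
  | refl => exact le_rfl
  | step _ hKT ih => exact ih.trans hKT.1

lemma inf_right (h : SubnormalIn H T) (C : Subgroup G) : SubnormalIn (H ⊓ C) (T ⊓ C) := by
  induction h with
  | refl => exact refl _
  | step _ hKT ih => exact ih.step (hKT.inf_right C)

lemma of_le_of_le (h : SubnormalIn H T) (hHK : H ≤ K) (hKT : K ≤ T) : SubnormalIn H K := by
  simpa [inf_eq_left.mpr hHK, inf_eq_right.mpr hKT] using h.inf_right K

lemma map {G' : Type*} [Group G'] (h : SubnormalIn H T) (f : G →* G') :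
    SubnormalIn (H.map f) (T.map f) := by
  induction h with
  | refl => exact refl _
  | step _ hKT ih => exact ih.step (hKT.map f)

end SubnormalIn

lemma IsSubnormal.subnormalIn_top {G : Type*} [Group G] {L : Subgroup G} (hL : IsSubnormal L) :
    SubnormalIn L ⊤ := by
  obtain ⟨n, c, hc0, hcn, hc⟩ := hL
  suffices ∀ i ≤ n, SubnormalIn L (c i) from hcn ▸ this n le_rfl
  intro i
  induction i with
  | zero => exact fun _ => hc0 ▸ SubnormalIn.refl _
  | succ i ih => exact fun hi => (ih (by omega)).step (hc i (by omega))

namespace IsQuasisimple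

variable {G : Type*} [Group G] {L : Subgroup G}

lemma commutator_eq_top (hL : IsQuasisimple L) : commutator L = ⊤ := by
  apply Subgroup.map_injective L.subtype_injective
  rw [L.map_subtype_commutator, hL.1, ← MonoidHom.range_eq_map, L.range_subtype]

lemma le_centralizer_of_normalIn (hL : IsQuasisimple L) {N : Subgroup G} (hN : NormalIn N L)
    (hLN : ¬ L ≤ N) : N ≤ Subgroup.centralizer L := by
  have := hL.2.1
  rcases hN.normal_subgroupOf.le_center_or_eq_top hL.commutator_eq_top with hZ | htop
  · intro n hn
    rw [Subgroup.mem_centralizer_iff]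
    intro y hy
    exact congrArg Subtype.val
      (Subgroup.mem_center_iff.mp (hZ (show ⟨n, hN.1 hn⟩ ∈ N.subgroupOf L from hn)) ⟨y, hy⟩)
  · exact absurd (Subgroup.subgroupOf_eq_top.mp htop) hLN

theorem le_centralizer_of_subnormalIn (hL : IsQuasisimple L) {T N : Subgroup G}
    (hLT : SubnormalIn L T) (hN : NormalIn N T) (hLN : ¬ L ≤ N) :
    N ≤ Subgroup.centralizer L := by
  induction hLT generalizing N with
  | refl => exact hL.le_centralizer_of_normalIn hN hLN
  | @step K T hLK hKT ih =>
    have hNK : NormalIn (N ⊓ K) K := by simpa [inf_eq_right.mpr hKT.1] using hN.inf_right K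
    have hcent : N ⊓ K ≤ Subgroup.centralizer L := ih hNK fun h => hLN (h.trans inf_le_left)
    have hLN_le : ⁅L, N⁆ ≤ N ⊓ K := by
      rw [inf_comm]
      exact (Subgroup.commutator_mono hLK.le le_rfl).trans (hKT.commutator_le_inf hN)
    have h₁ : ⁅⁅L, N⁆, L⁆ = ⊥ :=
      Subgroup.commutator_eq_bot_iff_le_centralizer.mpr (hLN_le.trans hcent)
    have h₂ : ⁅⁅N, L⁆, L⁆ = ⊥ := by rwa [Subgroup.commutator_comm N]
    have h₃ := Subgroup.commutator_commutator_eq_bot_of_rotate h₁ h₂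
    rwa [hL.1, Subgroup.commutator_comm, Subgroup.commutator_eq_bot_iff_le_centralizer] at h₃

theorem le_or_le_centralizer (hL : IsQuasisimple L) {H T : Subgroup G} (hH : SubnormalIn H T)
    (hLT : SubnormalIn L T) : L ≤ H ∨ H ≤ Subgroup.centralizer L := by
  induction hH with
  | refl => exact Or.inl hLT.le
  | @step K T hHK hKT ih =>
    by_cases hLK : L ≤ K
    · exact ih (hLT.of_le_of_le hLK hKT.1)
    · exact Or.inr (hHK.le.trans (hL.le_centralizer_of_subnormalIn hLT hKT hLK))

end IsQuasisimple

theorem IsComponent.le_map_conj {G : Type*} [Group G] {L : Subgroup G} (hL : IsComponent L)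
    {S : Set G} (hSL : S ⊆ L) (hSZ : ¬ S ⊆ (Subgroup.centralizer (L : Set G) : Set G)) {k : G}
    (hk : MulAut.conj k '' S = S) : L ≤ L.map (MulAut.conj k : G →* G) := by
  have hM : SubnormalIn (L.map (MulAut.conj k : G →* G)) ⊤ := by
    simpa [Subgroup.map_top_of_surjective (MulAut.conj k : G →* G) (MulAut.conj k).surjective]
      using hL.1.subnormalIn_top.map (MulAut.conj k : G →* G)
  refine (hL.2.le_or_le_centralizer hM hL.1.subnormalIn_top).resolve_right fun hcent =>
    hSZ fun s hs => hcent ?_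
  rw [← hk] at hs
  obtain ⟨s', hs', rfl⟩ := hs
  exact ⟨s', hSL hs', rfl⟩

theorem statement3_general {G : Type*} [Group G] (L : Subgroup G) (hL : IsComponent L)
    (K : Subgroup G) (S : Set G) (hSL : S ⊆ (L : Set G))
    (hSZ : ¬ S ⊆ {x | x ∈ L ∧ ∀ y ∈ L, x * y = y * x})
    (hK : ∀ k ∈ K, (fun h => k * h * k⁻¹) '' S = S) :
    K ≤ Subgroup.normalizer (L : Set G) := by
  have hSC : ¬ S ⊆ (Subgroup.centralizer (L : Set G) : Set G) := fun hC =>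
    hSZ fun s hs => ⟨hSL hs, fun y hy => (Subgroup.mem_centralizer_iff.mp (hC hs) y hy).symm⟩
  exact Subgroup.le_normalizer_of_forall_le_map_conj fun k hk =>
    hL.le_map_conj hSL hSC (hK k hk)

/-- if `L` is a component of a finite group `G` and `K ≤ G` normalizes a subset
`S ⊆ L` not contained in `Z(L)`, then `K ≤ N_G(L)`. -/
theorem statement3 {G : Type*} [Group G] [Finite G] (L : Subgroup G) (hL : IsComponent L)
    (K : Subgroup G) (S : Set G) (hSL : S ⊆ (L : Set G))
    (hSZ : ¬ S ⊆ {x | x ∈ L ∧ ∀ y ∈ L, x * y = y * x})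
    (hK : ∀ k ∈ K, (fun h => k * h * k⁻¹) '' S = S) :
    K ≤ Subgroup.normalizer (L : Set G) :=
  statement3_general L hL K S hSL hSZ hK

end QF
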